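/- arXiv:2503.03684 — 2 statements merged into one kernel-verified Lean document; each statement's English description precedes it below -/
import Mathlib

section
/- Let H : R^d → R be L-smooth and bounded below by H*. Consider θ_{t+1} = θ_t - η Ĝ_t with η ≤ 1/(2L), where E[Ĝ_t | θ_t] = ∇H(θ_t) + b_t with ||b_t|| ≤ β and E[||Ĝ_t - E[Ĝ_t|θ_t]||^2 | θ_t] ≤ v. Then (1/T) ∑_{t=0}^{T-1} E[||∇H(θ_t)||^2] ≤ (4/(ηT))(H(θ_0) - H*) + 2β^2 + 2Lηv. -/
/-!
By the descent lemma, `H (θ - η G) ≤ H θ - η ⟪∇H θ, G⟫ + (L η² / 2) ‖G‖²`. In expectation, the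
pull-out property replaces `G` by its conditional mean `∇H θ + b` inside the inner product, and
`E ‖G‖² = E ‖E[G | θ]‖² + E ‖G - E[G | θ]‖²` isolates the variance `v`. Because `L η ≤ 1/2`, the
remaining integrand `-η ⟪g, g + b⟫ + (L η² / 2) ‖g + b‖²` is at most `(η / 2) (β² - ‖g‖²)`, so each
step lowers `E H(θ_t)` by `(η / 2) E ‖∇H(θ_t)‖²` up to an error `(η / 2) β² + (L η² / 2) v`.
Telescoping against `H ≥ H*` gives the bound with a factor 2 to spare.
-/

open MeasureTheory Finset
open scoped RealInnerProductSpace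

section Smooth

variable {E : Type*} [NormedAddCommGroup E] [InnerProductSpace ℝ E] [CompleteSpace E]
  {f : E → ℝ} {K : NNReal}

theorem le_add_inner_gradient_add_sq (hf : Differentiable ℝ f)
    (hK : LipschitzWith K (gradient f)) (x y : E) :
    f y ≤ f x + ⟪gradient f x, y - x⟫ + K / 2 * ‖y - x‖ ^ 2 := by
  set v := y - x
  have hline (s : ℝ) : HasDerivAt (fun s : ℝ => f (x + s • v)) ⟪gradient f (x + s • v), v⟫ s := by
    have hpath : HasDerivAt (fun s : ℝ => x + s • v) v s := by
      simpa using ((hasDerivAt_id s).smul_const v).const_add x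
    simpa [InnerProductSpace.toDual_apply_apply, Function.comp_def] using
      (hf _).hasGradientAt.hasFDerivAt.comp_hasDerivAt s hpath
  set φ : ℝ → ℝ := fun s => f (x + s • v) - ⟪gradient f x, v⟫ * s - K * ‖v‖ ^ 2 / 2 * s ^ 2
  have hφ (s : ℝ) : HasDerivAt φ
      (⟪gradient f (x + s • v) - gradient f x, v⟫ - K * ‖v‖ ^ 2 * s) s := by
    refine (((hline s).sub ((hasDerivAt_id s).const_mul ⟪gradient f x, v⟫)).sub
      ((hasDerivAt_pow 2 s).const_mul (K * ‖v‖ ^ 2 / 2))).congr_deriv ?_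
    rw [inner_sub_left]
    push_cast
    ring
  have hanti : AntitoneOn φ (Set.Icc 0 1) := by
    refine antitoneOn_of_deriv_nonpos (convex_Icc 0 1)
      (fun s _ => (hφ s).continuousAt.continuousWithinAt)
      (fun s _ => (hφ s).differentiableAt.differentiableWithinAt) fun s hs => ?_
    rw [interior_Icc] at hs
    have hgrowth : ⟪gradient f (x + s • v) - gradient f x, v⟫ ≤ K * s * ‖v‖ ^ 2 :=
      calc ⟪gradient f (x + s • v) - gradient f x, v⟫
          ≤ ‖gradient f (x + s • v) - gradient f x‖ * ‖v‖ := real_inner_le_norm _ _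
        _ ≤ K * ‖(x + s • v) - x‖ * ‖v‖ := by
          gcongr
          simpa [dist_eq_norm] using hK.dist_le_mul (x + s • v) x
        _ = K * s * ‖v‖ ^ 2 := by
          rw [add_sub_cancel_left, norm_smul, Real.norm_of_nonneg hs.1.le]
          ring
    rw [(hφ s).deriv]
    linarith
  have := hanti (by simp) (by simp) zero_le_one
  simp only [φ, zero_smul, add_zero, one_smul, add_sub_cancel, v] at this
  linarith

theorem apply_sub_smul_le (hf : Differentiable ℝ f) (hK : LipschitzWith K (gradient f))
    (x G : E) (η : ℝ) :
    f (x - η • G) ≤ f x - η * ⟪gradient f x, G⟫ + K * η ^ 2 / 2 * ‖G‖ ^ 2 := by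
  have := le_add_inner_gradient_add_sq hf hK x (x - η • G)
  rw [sub_sub_cancel_left, inner_neg_right, real_inner_smul_right, norm_neg, norm_smul,
    Real.norm_eq_abs, mul_pow, sq_abs] at this
  linarith

end Smooth

theorem neg_mul_inner_add_le {E : Type*} [NormedAddCommGroup E] [InnerProductSpace ℝ E]
    {g b : E} {β η c : ℝ} (hη : 0 ≤ η) (hc : c ≤ η / 4) (hb : ‖b‖ ≤ β) :
    -(η * ⟪g, g + b⟫) + c * ‖g + b‖ ^ 2 ≤ η / 2 * (β ^ 2 - ‖g‖ ^ 2) := by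
  have hgb : ⟪g, g + b⟫ = (‖g‖ ^ 2 + ‖g + b‖ ^ 2 - ‖b‖ ^ 2) / 2 := by
    rw [inner_add_right, real_inner_self_eq_norm_sq, norm_add_sq_real]
    ring
  have hb2 : ‖b‖ ^ 2 ≤ β ^ 2 := pow_le_pow_left₀ (norm_nonneg b) hb 2
  rw [hgb]
  nlinarith [mul_le_mul_of_nonneg_right hc (sq_nonneg ‖g + b‖),
    mul_nonneg hη (sq_nonneg ‖g + b‖), mul_le_mul_of_nonneg_left hb2 hη]

section ConditionalExpectation

variable {Ω E : Type*} {m m0 : MeasurableSpace Ω} {μ : Measure Ω}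
  [NormedAddCommGroup E] [InnerProductSpace ℝ E]

theorem MeasureTheory.MemLp.integrable_inner {f g : Ω → E} (hf : MemLp f 2 μ)
    (hg : MemLp g 2 μ) : Integrable (fun ω => ⟪f ω, g ω⟫) μ := by
  refine (L2.integrable_inner (𝕜 := ℝ) (hf.toLp f) (hg.toLp g)).congr ?_
  filter_upwards [hf.coeFn_toLp, hg.coeFn_toLp] with ω hfω hgω
  rw [hfω, hgω]

theorem integral_le_of_ae_condExp_le [IsProbabilityMeasure μ] (hm : m ≤ m0) {f : Ω → ℝ} {v : ℝ}
    (h : ∀ᵐ ω ∂μ, μ[f|m] ω ≤ v) : ∫ ω, f ω ∂μ ≤ v :=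
  calc ∫ ω, f ω ∂μ = ∫ ω, μ[f|m] ω ∂μ := (integral_condExp hm).symm
    _ ≤ ∫ _, v ∂μ := integral_mono_ae integrable_condExp (integrable_const v) h
    _ = v := by simp

variable [CompleteSpace E]

theorem integral_inner_condExp_right (hm : m ≤ m0) [SigmaFinite (μ.trim hm)] {f g : Ω → E}
    (hf : AEStronglyMeasurable[m] f μ) (hfg : Integrable (fun ω => ⟪f ω, g ω⟫) μ)
    (hg : Integrable g μ) :
    ∫ ω, ⟪f ω, g ω⟫ ∂μ = ∫ ω, ⟪f ω, μ[g|m] ω⟫ ∂μ := by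
  rw [← integral_condExp hm]
  exact integral_congr_ae (condExp_bilin_of_aestronglyMeasurable_left (innerSL ℝ) hf hfg hg)

theorem integral_norm_sq_eq_condExp_add (hm : m ≤ m0) [IsFiniteMeasure μ] {g : Ω → E}
    (hg : MemLp g 2 μ) :
    ∫ ω, ‖g ω‖ ^ 2 ∂μ = ∫ ω, ‖μ[g|m] ω‖ ^ 2 ∂μ + ∫ ω, ‖g ω - μ[g|m] ω‖ ^ 2 ∂μ := by
  have hE : MemLp (μ[g|m]) 2 μ := hg.condExp one_le_two
  have horth : ∫ ω, ⟪μ[g|m] ω, g ω - μ[g|m] ω⟫ ∂μ = 0 := by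
    simp_rw [inner_sub_right]
    rw [integral_sub (hE.integrable_inner hg) (hE.integrable_inner hE),
      integral_inner_condExp_right hm stronglyMeasurable_condExp.aestronglyMeasurable
        (hE.integrable_inner hg) (hg.integrable one_le_two), sub_self]
  have hdecomp (ω : Ω) : ‖g ω‖ ^ 2 = ‖μ[g|m] ω‖ ^ 2 + 2 * ⟪μ[g|m] ω, g ω - μ[g|m] ω⟫
      + ‖g ω - μ[g|m] ω‖ ^ 2 := by
    rw [← norm_add_sq_real, add_sub_cancel]
  have hE2 : Integrable (fun ω => ‖μ[g|m] ω‖ ^ 2) μ := hE.integrable_norm_pow two_ne_zero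
  have hcross : Integrable (fun ω => 2 * ⟪μ[g|m] ω, g ω - μ[g|m] ω⟫) μ :=
    (hE.integrable_inner (hg.sub hE)).const_mul 2
  have hres : Integrable (fun ω => ‖g ω - μ[g|m] ω‖ ^ 2) μ :=
    (hg.sub hE).integrable_norm_pow two_ne_zero
  have hsum : Integrable (fun ω => ‖μ[g|m] ω‖ ^ 2 + 2 * ⟪μ[g|m] ω, g ω - μ[g|m] ω⟫) μ :=
    hE2.add hcross
  simp_rw [hdecomp]
  rw [integral_add hsum hres, integral_add hE2 hcross, integral_const_mul, horth,
    mul_zero, add_zero]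

theorem integral_neg_mul_inner_add_mul_norm_sq_condExp (hm : m ≤ m0) [IsFiniteMeasure μ]
    {g G : Ω → E} (hgm : AEStronglyMeasurable[m] g μ) (hg : MemLp g 2 μ) (hG : MemLp G 2 μ)
    (η c : ℝ) :
    ∫ ω, (-(η * ⟪g ω, G ω⟫) + c * ‖G ω‖ ^ 2) ∂μ =
      ∫ ω, (-(η * ⟪g ω, μ[G|m] ω⟫) + c * ‖μ[G|m] ω‖ ^ 2) ∂μ
        + c * ∫ ω, ‖G ω - μ[G|m] ω‖ ^ 2 ∂μ := by
  have hE : MemLp (μ[G|m]) 2 μ := hG.condExp one_le_two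
  rw [integral_add ((hg.integrable_inner hG).const_mul η).fun_neg
      ((hG.integrable_norm_pow two_ne_zero).const_mul c),
    integral_add ((hg.integrable_inner hE).const_mul η).fun_neg
      ((hE.integrable_norm_pow two_ne_zero).const_mul c),
    integral_neg, integral_neg, integral_const_mul, integral_const_mul, integral_const_mul,
    integral_const_mul, integral_inner_condExp_right hm hgm (hg.integrable_inner hG)
      (hG.integrable one_le_two), integral_norm_sq_eq_condExp_add hm hG]
  ring

end ConditionalExpectation

section Step

variable {Ω E : Type*} {m m0 : MeasurableSpace Ω} {μ : Measure Ω}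
  [NormedAddCommGroup E] [InnerProductSpace ℝ E] [CompleteSpace E]
  {f : E → ℝ} {K : NNReal} {x G : Ω → E} {η : ℝ}

theorem integrable_comp_sub_smul [IsFiniteMeasure μ] (hf : Differentiable ℝ f)
    (hK : LipschitzWith K (gradient f)) {fstar : ℝ} (hlow : ∀ y, fstar ≤ f y)
    (hx : AEStronglyMeasurable x μ)
    (hfx : Integrable (fun ω => f (x ω)) μ) (hg : MemLp (fun ω => gradient f (x ω)) 2 μ)
    (hG : MemLp G 2 μ) :
    Integrable (fun ω => f (x ω - η • G ω)) μ := by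
  refine integrable_of_le_of_le (g₁ := fun _ => fstar)
    (hf.continuous.comp_aestronglyMeasurable (hx.sub (hG.1.const_smul η)))
    (ae_of_all _ fun ω => hlow _) (ae_of_all _ fun ω => apply_sub_smul_le hf hK (x ω) (G ω) η)
    (integrable_const fstar) ?_
  exact (hfx.sub ((hg.integrable_inner hG).const_mul η)).add
    ((hG.integrable_norm_pow two_ne_zero).const_mul _)

theorem integral_comp_sub_smul_le [IsProbabilityMeasure μ] (hf : Differentiable ℝ f)
    (hK : LipschitzWith K (gradient f)) (hm : m ≤ m0) (hx : StronglyMeasurable[m] x)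
    (hfx : Integrable (fun ω => f (x ω)) μ) (hfx' : Integrable (fun ω => f (x ω - η • G ω)) μ)
    (hg : MemLp (fun ω => gradient f (x ω)) 2 μ) (hG : MemLp G 2 μ)
    {b : Ω → E} {β v : ℝ} (hmean : μ[G|m] =ᵐ[μ] fun ω => gradient f (x ω) + b ω)
    (hb : ∀ᵐ ω ∂μ, ‖b ω‖ ≤ β) (hvar : ∫ ω, ‖G ω - μ[G|m] ω‖ ^ 2 ∂μ ≤ v)
    (hη : 0 ≤ η) (hKη : 2 * K * η ≤ 1) :
    ∫ ω, f (x ω - η • G ω) ∂μ ≤ ∫ ω, f (x ω) ∂μ - η / 2 * ∫ ω, ‖gradient f (x ω)‖ ^ 2 ∂μ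
      + η / 2 * β ^ 2 + K * η ^ 2 / 2 * v := by
  set c : ℝ := K * η ^ 2 / 2
  have hc : c ≤ η / 4 := by
    simp only [c]
    nlinarith
  have hgm : AEStronglyMeasurable[m] (fun ω => gradient f (x ω)) μ :=
    (hK.continuous.comp_stronglyMeasurable hx).aestronglyMeasurable
  have hE : MemLp (μ[G|m]) 2 μ := hG.condExp one_le_two
  have hgsq := hg.integrable_norm_pow two_ne_zero
  have hstep : Integrable (fun ω => -(η * ⟪gradient f (x ω), G ω⟫) + c * ‖G ω‖ ^ 2) μ :=
    ((hg.integrable_inner hG).const_mul η).fun_neg.fun_add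
      ((hG.integrable_norm_pow two_ne_zero).const_mul c)
  have hmeanpart : Integrable
      (fun ω => -(η * ⟪gradient f (x ω), μ[G|m] ω⟫) + c * ‖μ[G|m] ω‖ ^ 2) μ :=
    ((hg.integrable_inner hE).const_mul η).fun_neg.fun_add
      ((hE.integrable_norm_pow two_ne_zero).const_mul c)
  have hbiaspart : Integrable (fun ω => η / 2 * (β ^ 2 - ‖gradient f (x ω)‖ ^ 2)) μ :=
    ((integrable_const _).sub hgsq).const_mul _
  calc ∫ ω, f (x ω - η • G ω) ∂μ
      ≤ ∫ ω, (f (x ω) + (-(η * ⟪gradient f (x ω), G ω⟫) + c * ‖G ω‖ ^ 2)) ∂μ :=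
        integral_mono hfx' (hfx.fun_add hstep) fun ω =>
          (apply_sub_smul_le hf hK (x ω) (G ω) η).trans_eq (by ring)
    _ = ∫ ω, f (x ω) ∂μ + ∫ ω, (-(η * ⟪gradient f (x ω), μ[G|m] ω⟫) + c * ‖μ[G|m] ω‖ ^ 2) ∂μ
          + c * ∫ ω, ‖G ω - μ[G|m] ω‖ ^ 2 ∂μ := by
        rw [integral_add hfx hstep, integral_neg_mul_inner_add_mul_norm_sq_condExp hm hgm hg hG,
          add_assoc]
    _ ≤ ∫ ω, f (x ω) ∂μ + ∫ ω, η / 2 * (β ^ 2 - ‖gradient f (x ω)‖ ^ 2) ∂μ + c * v := by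
        refine add_le_add (add_le_add le_rfl (integral_mono_ae hmeanpart hbiaspart ?_))
          (mul_le_mul_of_nonneg_left hvar (by positivity))
        filter_upwards [hmean, hb] with ω hω hbω
        rw [hω]
        exact neg_mul_inner_add_le hη hc hbω
    _ = _ := by
        rw [integral_const_mul, integral_sub (integrable_const _) hgsq, integral_const]
        simp only [probReal_univ, one_smul]
        ring

end Step

theorem mean_le_of_telescoping_descent {a D : ℕ → ℝ} {c C Dlow : ℝ} (hc : 0 < c)
    (hstep : ∀ t, c * a t ≤ D t - D (t + 1) + C) (hlow : ∀ t, Dlow ≤ D t) {T : ℕ} (hT : 0 < T) :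
    (1 / T : ℝ) * ∑ t ∈ range T, a t ≤ (D 0 - Dlow) / (c * T) + C / c := by
  have hsum : c * ∑ t ∈ range T, a t ≤ D 0 - Dlow + T * C :=
    calc c * ∑ t ∈ range T, a t ≤ ∑ t ∈ range T, (D t - D (t + 1) + C) := by
          rw [mul_sum]
          exact sum_le_sum fun t _ => hstep t
      _ = D 0 - D T + T * C := by
          rw [sum_add_distrib, sum_range_sub', sum_const, card_range, nsmul_eq_mul]
      _ ≤ D 0 - Dlow + T * C := by linarith [hlow T]
  have hT' : (0 : ℝ) < T := by exact_mod_cast hT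
  calc (1 / T : ℝ) * ∑ t ∈ range T, a t = (c * ∑ t ∈ range T, a t) / (c * T) := by
        field_simp
    _ ≤ (D 0 - Dlow + T * C) / (c * T) := by gcongr
    _ = (D 0 - Dlow) / (c * T) + C / c := by
        field_simp

theorem biased_sgd_nonconvex_rate_general {dim : ℕ} (H : EuclideanSpace ℝ (Fin dim) → ℝ)
    (L : ℝ) (hL : 0 < L)
    (hdiff : Differentiable ℝ H)
    (hlip : ∀ x y, ‖gradient H x - gradient H y‖ ≤ L * ‖x - y‖)
    (Hstar : ℝ) (hlow : ∀ x, Hstar ≤ H x)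
    {Ω : Type*} [MeasurableSpace Ω] (μ : Measure Ω) [IsProbabilityMeasure μ]
    (θ Ghat : ℕ → Ω → EuclideanSpace ℝ (Fin dim))
    (b : ℕ → Ω → EuclideanSpace ℝ (Fin dim))
    (hθmeas : ∀ t, Measurable (θ t))
    (hG2 : ∀ t, MemLp (Ghat t) 2 μ)
    (η : ℝ) (hη0 : 0 < η) (hη : η ≤ 1 / (2 * L))
    (hupd : ∀ t, ∀ ω, θ (t + 1) ω = θ t ω - η • Ghat t ω)
    (hmean : ∀ t,
      μ[Ghat t | MeasurableSpace.comap (θ t) inferInstance]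
        =ᵐ[μ] fun ω => gradient H (θ t ω) + b t ω)
    (β : ℝ) (hbias : ∀ t ω, ‖b t ω‖ ≤ β)
    (v : ℝ)
    (hvar : ∀ t, ∀ᵐ ω ∂μ,
      (μ[(fun ω' => ‖Ghat t ω' -
          (μ[Ghat t | MeasurableSpace.comap (θ t) inferInstance]) ω'‖ ^ 2) |
        MeasurableSpace.comap (θ t) inferInstance]) ω ≤ v)
    (θ0 : EuclideanSpace ℝ (Fin dim)) (hθ0 : ∀ ω, θ 0 ω = θ0)
    (hgint : ∀ t, Integrable (fun ω => ‖gradient H (θ t ω)‖ ^ 2) μ)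
    (T : ℕ) (hT : 0 < T) :
    (1 / T : ℝ) * ∑ t ∈ range T, ∫ ω, ‖gradient H (θ t ω)‖ ^ 2 ∂μ ≤
      (4 / (η * T)) * (H θ0 - Hstar) + 2 * β ^ 2 + 2 * L * η * v := by
  lift L to NNReal using hL.le with K
  have hK : LipschitzWith K (gradient H) :=
    LipschitzWith.of_dist_le_mul fun x y => by simpa only [dist_eq_norm] using hlip x y
  have hKη : 2 * (K : ℝ) * η ≤ 1 := by
    rw [le_div_iff₀ (by positivity)] at hη
    linarith
  have hg (t : ℕ) : MemLp (fun ω => gradient H (θ t ω)) 2 μ :=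
    (memLp_two_iff_integrable_sq_norm
      (hK.continuous.comp_aestronglyMeasurable (hθmeas t).aestronglyMeasurable)).mpr (hgint t)
  have hvar' (t : ℕ) := integral_le_of_ae_condExp_le (hθmeas t).comap_le (hvar t)
  have hv : 0 ≤ v := (integral_nonneg fun ω => by positivity).trans (hvar' 0)
  have hint (t : ℕ) : Integrable (fun ω => H (θ t ω)) μ := by
    induction t with
    | zero => simp only [hθ0, integrable_const]
    | succ t ih =>
      simpa only [hupd] using integrable_comp_sub_smul hdiff hK hlow
        (hθmeas t).aestronglyMeasurable ih (hg t) (hG2 t)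
  have hdesc (t : ℕ) : η / 2 * ∫ ω, ‖gradient H (θ t ω)‖ ^ 2 ∂μ ≤
      ∫ ω, H (θ t ω) ∂μ - ∫ ω, H (θ (t + 1) ω) ∂μ + (η / 2 * β ^ 2 + K * η ^ 2 / 2 * v) := by
    have := integral_comp_sub_smul_le hdiff hK (hθmeas t).comap_le
      (comap_measurable (θ t)).stronglyMeasurable (hint t)
      (by simpa only [hupd] using hint (t + 1))
      (hg t) (hG2 t) (hmean t) (ae_of_all _ (hbias t)) (hvar' t) hη0.le hKη
    simp only [← hupd] at this
    linarith
  have hlowint (t : ℕ) : Hstar ≤ ∫ ω, H (θ t ω) ∂μ := by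
    simpa using integral_mono (integrable_const Hstar) (hint t) fun ω => hlow _
  have h0 : ∫ ω, H (θ 0 ω) ∂μ = H θ0 := by simp [hθ0]
  have hD : 0 ≤ H θ0 - Hstar := sub_nonneg.mpr (hlow θ0)
  calc (1 / T : ℝ) * ∑ t ∈ range T, ∫ ω, ‖gradient H (θ t ω)‖ ^ 2 ∂μ
      ≤ (H θ0 - Hstar) / (η / 2 * T) + (η / 2 * β ^ 2 + K * η ^ 2 / 2 * v) / (η / 2) :=
        h0 ▸ mean_le_of_telescoping_descent (by positivity) hdesc hlowint hT
    _ = 2 / (η * T) * (H θ0 - Hstar) + β ^ 2 + K * η * v := by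
        field_simp
        ring
    _ ≤ _ := by
        have := mul_nonneg (by positivity : (0 : ℝ) ≤ 2 / (η * T)) hD
        have : 0 ≤ (K : ℝ) * η * v := by positivity
        rw [show (4 : ℝ) / (η * T) = 2 * (2 / (η * T)) by ring]
        linarith [sq_nonneg β]

/-- Biased, noisy SGD on a nonconvex L-smooth function bounded below:
average expected squared gradient norm bound with bias β and variance v. -/
theorem biased_sgd_nonconvex_rate {dim : ℕ} (H : EuclideanSpace ℝ (Fin dim) → ℝ)
    (L : ℝ) (hL : 0 < L)
    (hdiff : Differentiable ℝ H)
    (hlip : ∀ x y, ‖gradient H x - gradient H y‖ ≤ L * ‖x - y‖)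
    (Hstar : ℝ) (hlow : ∀ x, Hstar ≤ H x)
    {Ω : Type*} [MeasurableSpace Ω] (μ : Measure Ω) [IsProbabilityMeasure μ]
    (θ Ghat : ℕ → Ω → EuclideanSpace ℝ (Fin dim))
    (b : ℕ → Ω → EuclideanSpace ℝ (Fin dim))
    (hθmeas : ∀ t, Measurable (θ t)) (hGmeas : ∀ t, Measurable (Ghat t))
    (hG2 : ∀ t, MemLp (Ghat t) 2 μ)
    (η : ℝ) (hη0 : 0 < η) (hη : η ≤ 1 / (2 * L))
    (hupd : ∀ t, ∀ ω, θ (t + 1) ω = θ t ω - η • Ghat t ω)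
    (hmean : ∀ t,
      μ[Ghat t | MeasurableSpace.comap (θ t) inferInstance]
        =ᵐ[μ] fun ω => gradient H (θ t ω) + b t ω)
    (β : ℝ) (hbias : ∀ t ω, ‖b t ω‖ ≤ β)
    (v : ℝ)
    (hvar : ∀ t, ∀ᵐ ω ∂μ,
      (μ[(fun ω' => ‖Ghat t ω' -
          (μ[Ghat t | MeasurableSpace.comap (θ t) inferInstance]) ω'‖ ^ 2) |
        MeasurableSpace.comap (θ t) inferInstance]) ω ≤ v)
    (θ0 : EuclideanSpace ℝ (Fin dim)) (hθ0 : ∀ ω, θ 0 ω = θ0)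
    (hgint : ∀ t, Integrable (fun ω => ‖gradient H (θ t ω)‖ ^ 2) μ)
    (T : ℕ) (hT : 0 < T) :
    (1 / T : ℝ) * ∑ t ∈ range T, ∫ ω, ‖gradient H (θ t ω)‖ ^ 2 ∂μ ≤
      (4 / (η * T)) * (H θ0 - Hstar) + 2 * β ^ 2 + 2 * L * η * v :=
  biased_sgd_nonconvex_rate_general H L hL hdiff hlip Hstar hlow μ θ Ghat b hθmeas hG2 η hη0 hη hupd
    hmean β hbias v hvar θ0 hθ0 hgint T hT
end

section
/- Let α ∈ [0, 1/3) and p ∈ (2α, 1]. Suppose among m gradients, at most αm are Byzantine, and screening retains exactly pm gradients including all retained honest ones. If G is the average of retained gradients, ∇H is the average honest gradient, and each honest gradient g_i satisfies ||g_i - ∇H|| ≤ r while each retained Byzantine gradient g_j satisfies ||g_j|| ≤ ||∇H|| + r, then ||G - ∇H|| ≤ (2α/p)(||∇H|| + r) + r. -/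
/-!
Centre everything at the honest average `∇H`: the deviation of the screened average is at most
the mean of the individual deviations `‖g i - ∇H‖` over the retained set. Retained honest
gradients contribute at most `r` each; a retained Byzantine gradient, being no longer than
`‖∇H‖ + r`, lies within `2 (‖∇H‖ + r)` of `∇H`, and there are at most `α m` of them among the
`p m` retained ones.
-/

open Finset

theorem norm_inv_card_smul_sum_sub_le {ι E : Type*} [SeminormedAddCommGroup E] [NormedSpace ℝ E]
    {s : Finset ι} (hs : s.Nonempty) (f : ι → E) (c : E) :
    ‖(#s : ℝ)⁻¹ • ∑ i ∈ s, f i - c‖ ≤ (#s : ℝ)⁻¹ * ∑ i ∈ s, ‖f i - c‖ := by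
  have hcard : (#s : ℝ) ≠ 0 := by exact_mod_cast hs.card_pos.ne'
  have hmean : (#s : ℝ)⁻¹ • ∑ i ∈ s, f i - c = (#s : ℝ)⁻¹ • ∑ i ∈ s, (f i - c) := by
    rw [sum_sub_distrib, smul_sub, sum_const, ← Nat.cast_smul_eq_nsmul ℝ, smul_smul,
      inv_mul_cancel₀ hcard, one_smul]
  rw [hmean, norm_smul, Real.norm_of_nonneg (by positivity)]
  gcongr
  exact norm_sum_le _ _

theorem sum_le_card_inter_mul_add_card_mul {ι : Type*} [DecidableEq ι] {s t : Finset ι}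
    {f : ι → ℝ} {a b : ℝ} (hb : 0 ≤ b) (hfa : ∀ i ∈ s ∩ t, f i ≤ a)
    (hfb : ∀ i ∈ s \ t, f i ≤ b) :
    ∑ i ∈ s, f i ≤ #(s ∩ t) * a + #s * b := by
  rw [← sum_inter_add_sum_sdiff s t]
  have hinter : ∑ i ∈ s ∩ t, f i ≤ #(s ∩ t) * a := by
    simpa using sum_le_card_nsmul _ _ _ hfa
  have hsdiff : ∑ i ∈ s \ t, f i ≤ #(s \ t) * b := by
    simpa using sum_le_card_nsmul _ _ _ hfb
  have hcard : (#(s \ t) : ℝ) ≤ #s := by exact_mod_cast card_le_card sdiff_subset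
  nlinarith

theorem norm_sub_le_two_mul_of_norm_le {E : Type*} [SeminormedAddCommGroup E] {x c : E} {r : ℝ}
    (hr : 0 ≤ r) (hx : ‖x‖ ≤ ‖c‖ + r) : ‖x - c‖ ≤ 2 * (‖c‖ + r) := by
  linarith [norm_sub_le x c]

theorem tnbs_lemma_general {d m : ℕ}
    (g : Fin m → EuclideanSpace ℝ (Fin d))
    (α p : ℝ)
    (B : Finset (Fin m)) (hB : (B.card : ℝ) ≤ α * m) (hBc : Bᶜ.Nonempty)
    (U : Finset (Fin m)) (hU : (U.card : ℝ) = p * m) (hUne : U.Nonempty)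
    (gradH : EuclideanSpace ℝ (Fin d))
    (G : EuclideanSpace ℝ (Fin d)) (hG : G = (U.card : ℝ)⁻¹ • ∑ i ∈ U, g i)
    (r : ℝ) (hhonest : ∀ i ∉ B, ‖g i - gradH‖ ≤ r)
    (hbyz : ∀ j ∈ U ∩ B, ‖g j‖ ≤ ‖gradH‖ + r) :
    ‖G - gradH‖ ≤ (2 * α / p) * (‖gradH‖ + r) + r := by
  obtain ⟨i₀, hi₀⟩ := hBc
  have hr : 0 ≤ r := (norm_nonneg _).trans (hhonest i₀ (mem_compl.mp hi₀))
  have hpm : 0 < p * m := hU ▸ (by exact_mod_cast hUne.card_pos)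
  have hbyz_card : (#(U ∩ B) : ℝ) ≤ α * m :=
    le_trans (by exact_mod_cast card_le_card inter_subset_right) hB
  have hsum : ∑ i ∈ U, ‖g i - gradH‖ ≤ #(U ∩ B) * (2 * (‖gradH‖ + r)) + #U * r :=
    sum_le_card_inter_mul_add_card_mul hr
      (fun j hj => norm_sub_le_two_mul_of_norm_le hr (hbyz j hj))
      (fun i hi => hhonest i (mem_sdiff.mp hi).2)
  calc ‖G - gradH‖ ≤ (#U : ℝ)⁻¹ * ∑ i ∈ U, ‖g i - gradH‖ :=
        hG ▸ norm_inv_card_smul_sum_sub_le hUne g gradH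
    _ ≤ (p * m)⁻¹ * (α * m * (2 * (‖gradH‖ + r)) + p * m * r) := by
        rw [← hU]
        refine mul_le_mul_of_nonneg_left (hsum.trans ?_) (by positivity)
        gcongr
    _ = (2 * α / p) * (‖gradH‖ + r) + r := by
        have hp : p ≠ 0 := left_ne_zero_of_mul hpm.ne'
        have hm : (m : ℝ) ≠ 0 := right_ne_zero_of_mul hpm.ne'
        field_simp

/-- Quantitative Lemma 1 for two-sided norm-based screening (TNBS). -/
theorem tnbs_lemma {d m : ℕ} (hm : 0 < m)
    (g : Fin m → EuclideanSpace ℝ (Fin d))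
    (α p : ℝ) (hα0 : 0 ≤ α) (hα : α < 1 / 3) (hp1 : 2 * α < p) (hp2 : p ≤ 1)
    (B : Finset (Fin m)) (hB : (B.card : ℝ) ≤ α * m) (hBc : Bᶜ.Nonempty)
    (U : Finset (Fin m)) (hU : (U.card : ℝ) = p * m) (hUne : U.Nonempty)
    (gradH : EuclideanSpace ℝ (Fin d))
    (hgradH : gradH = (Bᶜ.card : ℝ)⁻¹ • ∑ i ∈ Bᶜ, g i)
    (G : EuclideanSpace ℝ (Fin d)) (hG : G = (U.card : ℝ)⁻¹ • ∑ i ∈ U, g i)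
    (r : ℝ) (hhonest : ∀ i ∉ B, ‖g i - gradH‖ ≤ r)
    (hretained_honest : Bᶜ ⊆ U)
    (hbyz : ∀ j ∈ U ∩ B, ‖g j‖ ≤ ‖gradH‖ + r) :
    ‖G - gradH‖ ≤ (2 * α / p) * (‖gradH‖ + r) + r :=
  tnbs_lemma_general g α p B hB hBc U hU hUne gradH G hG r hhonest hbyz
end
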